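/- arXiv:2510.11433 — 2 statements merged into one kernel-verified Lean document; each statement's English description precedes it below -/
import Mathlib

section
/- Let H be a Euclidean space, let D be a nonempty subset of H, let x ∈ D and y ∈ H. Then y belongs to the Fréchet normal cone N_F(x;D) if and only if lim_{α↓0} d_D(x+αy)/α = ‖y‖, where d_D is the distance function to D. -/
/-!
Expanding the square,
`dist (x + α • y) z ^ 2 = α² ‖y‖² - 2α ⟪z - x, y⟫ + ‖z - x‖²`.
If `⟪z - x, y⟫ ≤ ε ‖z - x‖` for all `z ∈ D` near `x`, completing the square in `‖z - x‖` bounds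
this below by `α² (‖y‖² - ε²)`, while points of `D` far from `x` are farther than `α ‖y‖` for small
`α`; so `d_D(x + α y) / α` is squeezed between `√(‖y‖² - ε²)` and `‖y‖`. Conversely, a point
`z ∈ D` with `⟪z - x, y⟫ > ε ‖z - x‖` makes `d_D(x + α y) / α < √(‖y‖² - ε²)` at `α = ‖z - x‖ / ε`,
and such points with `‖z - x‖ → 0` give arbitrarily small such `α`.
-/

open Filter Topology Set Metric
open scoped RealInnerProductSpace

noncomputable section

/-- The Fréchet normal cone to `D` at `x`: empty if `x ∉ D`, and otherwise the set of
`y` with `limsup_{z → x, z ∈ D \ {x}} ⟨z - x, y⟩ / ‖z - x‖ ≤ 0`, expressed in ε-δ form. -/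
def fNormal {E : Type*} [NormedAddCommGroup E] [InnerProductSpace ℝ E]
    (D : Set E) (x : E) : Set E :=
  {y | x ∈ D ∧ ∀ ε : ℝ, 0 < ε → ∃ δ : ℝ, 0 < δ ∧
    ∀ z ∈ D, ‖z - x‖ < δ → ⟪z - x, y⟫ ≤ ε * ‖z - x‖}

section

variable {E : Type*} [NormedAddCommGroup E] [InnerProductSpace ℝ E] {D : Set E} {x y z : E}
  {α ε δ : ℝ}

lemma sq_dist_add_smul (x y z : E) (α : ℝ) :
    dist (x + α • y) z ^ 2 = α ^ 2 * ‖y‖ ^ 2 - 2 * α * ⟪z - x, y⟫ + ‖z - x‖ ^ 2 := by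
  rw [dist_eq_norm, show x + α • y - z = α • y - (z - x) by abel, norm_sub_sq_real,
    real_inner_smul_left, real_inner_comm, norm_smul, Real.norm_eq_abs, mul_pow, sq_abs]
  ring

lemma sq_mul_le_sq_dist_add_smul_of_inner_le (hα : 0 ≤ α) (h : ⟪z - x, y⟫ ≤ ε * ‖z - x‖) :
    α ^ 2 * (‖y‖ ^ 2 - ε ^ 2) ≤ dist (x + α • y) z ^ 2 := by
  rw [sq_dist_add_smul]
  nlinarith [sq_nonneg (‖z - x‖ - α * ε), mul_le_mul_of_nonneg_left h (by positivity : 0 ≤ 2 * α)]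

lemma sq_dist_add_smul_lt_of_lt_inner (hα : 0 < α) (hαε : α * ε = ‖z - x‖)
    (h : ε * ‖z - x‖ < ⟪z - x, y⟫) :
    dist (x + α • y) z ^ 2 < α ^ 2 * (‖y‖ ^ 2 - ε ^ 2) := by
  rw [sq_dist_add_smul]
  rw [← hαε] at h ⊢
  nlinarith [mul_lt_mul_of_pos_left h (by positivity : 0 < 2 * α)]

lemma mul_norm_le_dist_add_smul_of_le_norm_sub (hα : 0 ≤ α) (hαδ : 2 * α * ‖y‖ ≤ δ)
    (hz : δ ≤ ‖z - x‖) :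
    α * ‖y‖ ≤ dist (x + α • y) z := by
  calc α * ‖y‖ ≤ ‖z - x‖ - ‖α • y‖ := by
        rw [norm_smul, Real.norm_of_nonneg hα]; linarith
    _ ≤ ‖z - x - α • y‖ := norm_sub_norm_le _ _
    _ = dist (x + α • y) z := by rw [dist_comm, dist_eq_norm]; congr 1; abel

lemma infDist_add_smul_le (hx : x ∈ D) (hα : 0 ≤ α) : infDist (x + α • y) D ≤ α * ‖y‖ := by
  calc infDist (x + α • y) D ≤ dist (x + α • y) x := infDist_le_dist_of_mem hx
    _ = α * ‖y‖ := by rw [dist_eq_norm, add_sub_cancel_left, norm_smul, Real.norm_of_nonneg hα]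

lemma mul_sqrt_eq_sqrt_sq_mul (hα : 0 ≤ α) (s : ℝ) : α * √s = √(α ^ 2 * s) := by
  rw [Real.sqrt_mul (sq_nonneg α), Real.sqrt_sq hα]

lemma mul_sqrt_le_infDist_add_smul (hx : x ∈ D)
    (hδ : ∀ z ∈ D, ‖z - x‖ < δ → ⟪z - x, y⟫ ≤ ε * ‖z - x‖) (hα : 0 ≤ α)
    (hαδ : 2 * α * ‖y‖ ≤ δ) : α * √(‖y‖ ^ 2 - ε ^ 2) ≤ infDist (x + α • y) D := by
  refine (le_infDist ⟨x, hx⟩).2 fun z hz => ?_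
  rw [mul_sqrt_eq_sqrt_sq_mul hα, Real.sqrt_le_left dist_nonneg]
  rcases lt_or_ge ‖z - x‖ δ with hnear | hfar
  · exact sq_mul_le_sq_dist_add_smul_of_inner_le hα (hδ z hz hnear)
  · have h := mul_norm_le_dist_add_smul_of_le_norm_sub hα hαδ hfar
    nlinarith [mul_nonneg hα (norm_nonneg y)]

lemma tendsto_infDist_add_smul_div_iff (hx : x ∈ D) :
    Tendsto (fun α : ℝ => infDist (x + α • y) D / α) (𝓝[>] 0) (𝓝 ‖y‖) ↔
      ∀ c < ‖y‖, ∀ᶠ α in 𝓝[>] 0, c < infDist (x + α • y) D / α := by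
  refine tendsto_order.trans (and_iff_left fun c hc => ?_)
  filter_upwards [self_mem_nhdsWithin] with α (hα : 0 < α)
  rw [div_lt_iff₀ hα]
  nlinarith [infDist_add_smul_le (y := y) hx hα.le]

lemma eventually_lt_infDist_add_smul_div (hy : y ∈ fNormal D x) {c : ℝ} (hc : c < ‖y‖) :
    ∀ᶠ α in 𝓝[>] 0, c < infDist (x + α • y) D / α := by
  obtain ⟨hx, hN⟩ := hy
  have hsqrt : ∀ᶠ ε in 𝓝 (0 : ℝ), c < √(‖y‖ ^ 2 - ε ^ 2) :=
    continuousAt_const.eventually_lt (by fun_prop)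
      (by rwa [zero_pow two_ne_zero, sub_zero, Real.sqrt_sq (norm_nonneg y)])
  obtain ⟨ε, hcε, hε⟩ := (hsqrt.and_frequently (frequently_gt_nhds (0 : ℝ))).exists
  obtain ⟨δ, hδ, hNδ⟩ := hN ε hε
  have hsmall : ∀ᶠ α in 𝓝 (0 : ℝ), 2 * α * ‖y‖ < δ :=
    (by fun_prop : Continuous fun α : ℝ => 2 * α * ‖y‖).continuousAt.eventually_lt
      continuousAt_const (by simpa using hδ)
  filter_upwards [hsmall.filter_mono nhdsWithin_le_nhds, self_mem_nhdsWithin] with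
    α hαδ (hα : 0 < α)
  rw [lt_div_iff₀ hα]
  calc c * α < √(‖y‖ ^ 2 - ε ^ 2) * α := by gcongr
    _ ≤ infDist (x + α • y) D := by
      rw [mul_comm]; exact mul_sqrt_le_infDist_add_smul hx hNδ hα.le hαδ.le

lemma lt_norm_of_mul_norm_lt_inner {v : E} (h : ε * ‖v‖ < ⟪v, y⟫) : ε < ‖y‖ := by
  have hv : 0 < ‖v‖ := norm_pos_iff.2 fun hv => by simp [hv] at h
  have := real_inner_le_norm v y
  nlinarith

lemma frequently_infDist_add_smul_div_lt (hx : x ∈ D) (hy : y ∉ fNormal D x) :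
    ∃ c < ‖y‖, ∃ᶠ α in 𝓝[>] 0, infDist (x + α • y) D / α < c := by
  have hbad : ¬ ∀ ε > 0, ∃ δ > 0, ∀ z ∈ D, ‖z - x‖ < δ → ⟪z - x, y⟫ ≤ ε * ‖z - x‖ :=
    fun h => hy ⟨hx, h⟩
  push Not at hbad
  obtain ⟨ε, hε, hbad⟩ := hbad
  obtain ⟨_, -, -, hεy⟩ := hbad 1 one_pos
  refine ⟨√(‖y‖ ^ 2 - ε ^ 2), ?_, frequently_iff.2 fun {U} hU => ?_⟩
  · have := lt_norm_of_mul_norm_lt_inner hεy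
    rw [Real.sqrt_lt' (hε.trans this)]
    nlinarith
  obtain ⟨u, hu, hUu⟩ := mem_nhdsGT_iff_exists_Ioo_subset.1 hU
  obtain ⟨z, hz, hzu, hzy⟩ := hbad (ε * u) (mul_pos hε hu)
  have hzx : 0 < ‖z - x‖ := norm_pos_iff.2 fun h => by simp [h] at hzy
  set α := ‖z - x‖ / ε
  have hα : 0 < α := div_pos hzx hε
  refine ⟨α, hUu ⟨hα, (div_lt_iff₀' hε).2 hzu⟩, ?_⟩
  rw [div_lt_iff₀ hα]
  calc infDist (x + α • y) D ≤ dist (x + α • y) z := infDist_le_dist_of_mem hz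
    _ < α * √(‖y‖ ^ 2 - ε ^ 2) := by
      rw [mul_sqrt_eq_sqrt_sq_mul hα.le, Real.lt_sqrt dist_nonneg]
      exact sq_dist_add_smul_lt_of_lt_inner hα (div_mul_cancel₀ _ hε.ne') hzy
    _ = √(‖y‖ ^ 2 - ε ^ 2) * α := mul_comm _ _

end

theorem frechet_normal_iff_dist_limit_general
    {E : Type*} [NormedAddCommGroup E] [InnerProductSpace ℝ E]
    (D : Set E) (x : E) (hx : x ∈ D) (y : E) :
    y ∈ fNormal D x ↔
      Tendsto (fun α : ℝ => Metric.infDist (x + α • y) D / α) (𝓝[>] 0) (𝓝 ‖y‖) := by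
  rw [tendsto_infDist_add_smul_div_iff hx]
  refine ⟨fun hy c hc => eventually_lt_infDist_add_smul_div hy hc, fun h => ?_⟩
  by_contra hy
  obtain ⟨c, hc, hfreq⟩ := frequently_infDist_add_smul_div_lt hx hy
  obtain ⟨α, hlt, hgt⟩ := (hfreq.and_eventually (h c hc)).exists
  exact lt_asymm hlt hgt

/-- For a nonempty `D ⊆ H` (`H` Euclidean), `x ∈ D` and `y ∈ H`:
`y ∈ N_F(x; D)` iff `lim_{α ↓ 0} d_D(x + α y) / α = ‖y‖`. -/
theorem frechet_normal_iff_dist_limit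
    {E : Type*} [NormedAddCommGroup E] [InnerProductSpace ℝ E] [FiniteDimensional ℝ E]
    (D : Set E) (hD : D.Nonempty) (x : E) (hx : x ∈ D) (y : E) :
    y ∈ fNormal D x ↔
      Tendsto (fun α : ℝ => Metric.infDist (x + α • y) D / α) (𝓝[>] 0) (𝓝 ‖y‖) :=
  frechet_normal_iff_dist_limit_general D x hx y
end
end

section
/- Suppose (𝒳, S, γ, (Λ_a)_{a∈A}) is a spectral decomposition system for a Euclidean space 𝔥 with {Λ_a : a ∈ A} closed in L(𝒳,𝔥). Let D be a nonempty S-invariant subset of 𝒳 and let X ∈ 𝔥. Then cone(X − Proj_{γ⁻¹(D)}(X)) = {Λ_a y : y ∈ cone(γ(X) − Proj_D(γ(X))), a ∈ A_X}, where for a set C, cone C = ⋃_{α>0} αC. In fact the stronger identity X − Proj_{γ⁻¹(D)}(X) = {Λ_a y : y ∈ γ(X) − Proj_D(γ(X)), a ∈ A_X} holds. -/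
/-!
Fix `a ∈ A_X`, so that `X = Λ_a (γ X)`. Since `Λ_a` is an isometry mapping `D` into `γ⁻¹(D)`
and `γ` is nonexpansive with `‖γ X‖ = ‖X‖`, a nearest point `z` of `D` to `γ X` yields the
nearest point `Λ_a z` of `γ⁻¹(D)` to `X`. Conversely, if `Z` is nearest in `γ⁻¹(D)` to `X`,
then `γ Z` is nearest in `D` to `γ X` and `‖γ X - γ Z‖ = ‖X - Z‖`, i.e. `⟪X, Z⟫ = ⟪γ X, γ Z⟫`.
Equality in axiom [C] forces `γ (X + Z) = γ X + γ Z`, and decomposing `X + Z` by [B] gives a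
single `a` with `X = Λ_a (γ X)` and `Z = Λ_a (γ Z)`. The cone identity follows because each
`Λ_a` is linear.
-/

open Filter Topology Set Metric
open scoped RealInnerProductSpace

noncomputable section

/-- A spectral decomposition system `(𝒳, S, γ, (Λ_a)_{a ∈ A})` for the space `H`:
`S` acts on `𝒳` by linear isometries (via `act`), `γ : H → 𝒳` is the spectral
mapping, each `Λ a : 𝒳 → H` is a linear isometry, and the axioms [A], [B], [C] hold,
with `τ` the `S`-invariant ordering mapping of axiom [A]. -/
structure SDS (𝒳 H : Type*) [NormedAddCommGroup 𝒳] [InnerProductSpace ℝ 𝒳]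
    [NormedAddCommGroup H] [InnerProductSpace ℝ H]
    (S : Type*) [Group S] (A : Type*) where
  act : S →* (𝒳 ≃ₗᵢ[ℝ] 𝒳)
  γ : H → 𝒳
  Λ : A → 𝒳 →ₗᵢ[ℝ] H
  τ : 𝒳 → 𝒳
  τ_inv : ∀ (s : S) (x : 𝒳), τ (act s x) = τ x
  τ_orbit : ∀ x : 𝒳, ∃ s : S, τ x = act s x
  γΛ : ∀ (a : A) (x : 𝒳), γ (Λ a x) = τ x
  decomp : ∀ X : H, ∃ a : A, X = Λ a (γ X)
  inner_le : ∀ X Y : H, ⟪X, Y⟫ ≤ ⟪γ X, γ Y⟫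

variable {𝒳 H S A : Type*} [NormedAddCommGroup 𝒳] [InnerProductSpace ℝ 𝒳]
    [NormedAddCommGroup H] [InnerProductSpace ℝ H] [Group S]

/-- The set `{Λ_a : a ∈ A}`, regarded as a subset of the space `L(𝒳, H)` of
continuous linear maps with the operator norm. -/
def SDS.LambdaSet (𝔖 : SDS 𝒳 H S A) : Set (𝒳 →L[ℝ] H) :=
  {L | ∃ a : A, L = (𝔖.Λ a).toContinuousLinearMap}

/-- `A_X = {a ∈ A : X = Λ_a (γ X)}`. -/
def SDS.AX (𝔖 : SDS 𝒳 H S A) (X : H) : Set A := {a | X = 𝔖.Λ a (𝔖.γ X)}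

/-- The (possibly multivalued) projector onto `D`: `Proj_D(x) = {y ∈ D : ‖x - y‖ = d_D(x)}`. -/
def projSet {E : Type*} [NormedAddCommGroup E] [InnerProductSpace ℝ E]
    (D : Set E) (x : E) : Set E :=
  {y ∈ D | ‖x - y‖ = Metric.infDist x D}

/-- `cone C = ⋃_{α > 0} α • C`. -/
def coneOf {E : Type*} [NormedAddCommGroup E] [InnerProductSpace ℝ E]
    (C : Set E) : Set E :=
  {z | ∃ α : ℝ, 0 < α ∧ ∃ c ∈ C, z = α • c}

section General

variable {E F : Type*} [NormedAddCommGroup E] [InnerProductSpace ℝ E]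
  [NormedAddCommGroup F] [InnerProductSpace ℝ F]

theorem mem_projSet_iff {D : Set E} {x y : E} :
    y ∈ projSet D x ↔ y ∈ D ∧ ∀ z ∈ D, ‖x - y‖ ≤ ‖x - z‖ := by
  simp only [projSet, mem_ofPred_eq, ← dist_eq_norm]
  refine and_congr_right fun hy => ⟨fun h z hz => h ▸ infDist_le_dist_of_mem hz, fun h => ?_⟩
  exact le_antisymm ((le_infDist ⟨y, hy⟩).2 h) (infDist_le_dist_of_mem hy)

theorem eq_of_norm_le_of_norm_sq_le_inner {x y : E} (hnorm : ‖x‖ ≤ ‖y‖)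
    (hinner : ‖y‖ ^ 2 ≤ ⟪x, y⟫) : x = y := by
  have hsq : ‖x - y‖ ^ 2 ≤ 0 := by
    rw [norm_sub_sq_real]
    nlinarith [norm_nonneg x]
  rw [← sub_eq_zero, ← norm_eq_zero]
  exact pow_eq_zero_iff two_ne_zero |>.1 (le_antisymm hsq (sq_nonneg _))

theorem coneOf_setOf_exists_apply {ι 𝓕 : Type*} [FunLike 𝓕 E F] [LinearMapClass 𝓕 ℝ E F]
    (f : ι → 𝓕) (s : Set ι) (C : Set E) :
    coneOf {Y | ∃ y ∈ C, ∃ i ∈ s, Y = f i y} = {Y | ∃ y ∈ coneOf C, ∃ i ∈ s, Y = f i y} := by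
  ext Y
  constructor
  · rintro ⟨α, hα, _, ⟨y, hy, i, hi, rfl⟩, rfl⟩
    exact ⟨α • y, ⟨α, hα, y, hy, rfl⟩, i, hi, (map_smul (f i) α y).symm⟩
  · rintro ⟨_, ⟨α, hα, y, hy, rfl⟩, i, hi, rfl⟩
    exact ⟨α, hα, f i y, ⟨y, hy, i, hi, rfl⟩, map_smul (f i) α y⟩

end General

namespace SDS

variable (𝔖 : SDS 𝒳 H S A)

theorem norm_γ (X : H) : ‖𝔖.γ X‖ = ‖X‖ := by
  obtain ⟨a, ha⟩ := 𝔖.decomp X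
  conv_rhs => rw [ha, (𝔖.Λ a).norm_map]

theorem γ_Λ_γ (a : A) (X : H) : 𝔖.γ (𝔖.Λ a (𝔖.γ X)) = 𝔖.γ X := by
  obtain ⟨b, hb⟩ := 𝔖.decomp X
  rw [𝔖.γΛ, ← 𝔖.γΛ b, ← hb]

theorem norm_γ_sub_γ_le (X Z : H) : ‖𝔖.γ X - 𝔖.γ Z‖ ≤ ‖X - Z‖ := by
  refine pow_le_pow_iff_left₀ (norm_nonneg _) (norm_nonneg _) two_ne_zero |>.1 ?_
  rw [norm_sub_sq_real, norm_sub_sq_real, norm_γ, norm_γ]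
  linarith [𝔖.inner_le X Z]

theorem inner_γ_eq_of_norm_sub_le {X Z : H} (h : ‖X - Z‖ ≤ ‖𝔖.γ X - 𝔖.γ Z‖) :
    ⟪X, Z⟫ = ⟪𝔖.γ X, 𝔖.γ Z⟫ := by
  have hsq := pow_le_pow_left₀ (norm_nonneg _) h 2
  rw [norm_sub_sq_real, norm_sub_sq_real, norm_γ, norm_γ] at hsq
  linarith [𝔖.inner_le X Z]

theorem norm_sub_Λ_of_mem_AX {X : H} {a : A} (ha : a ∈ 𝔖.AX X) (z : 𝒳) :
    ‖X - 𝔖.Λ a z‖ = ‖𝔖.γ X - z‖ := by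
  conv_lhs => rw [show X = 𝔖.Λ a (𝔖.γ X) from ha, ← map_sub, (𝔖.Λ a).norm_map]

theorem γ_add_of_inner_eq {X Z : H} (h : ⟪X, Z⟫ = ⟪𝔖.γ X, 𝔖.γ Z⟫) :
    𝔖.γ (X + Z) = 𝔖.γ X + 𝔖.γ Z := by
  have hX := 𝔖.inner_le (X + Z) X
  have hZ := 𝔖.inner_le (X + Z) Z
  have hsq : ‖𝔖.γ (X + Z) - (𝔖.γ X + 𝔖.γ Z)‖ ^ 2 ≤ 0 := by
    rw [norm_sub_sq_real, norm_add_sq_real, norm_γ, norm_γ, norm_γ, inner_add_right,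
      norm_add_sq_real]
    rw [inner_add_left, real_inner_self_eq_norm_sq] at hX hZ
    linarith [real_inner_comm Z X, real_inner_self_eq_norm_sq Z]
  rw [← sub_eq_zero, ← norm_eq_zero]
  exact pow_eq_zero_iff two_ne_zero |>.1 (le_antisymm hsq (sq_nonneg _))

theorem exists_Λ_eq_of_inner_eq {X Z : H} (h : ⟪X, Z⟫ = ⟪𝔖.γ X, 𝔖.γ Z⟫) :
    ∃ a, X = 𝔖.Λ a (𝔖.γ X) ∧ Z = 𝔖.Λ a (𝔖.γ Z) := by
  obtain ⟨a, ha⟩ := 𝔖.decomp (X + Z)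
  rw [𝔖.γ_add_of_inner_eq h, map_add] at ha
  set P := 𝔖.Λ a (𝔖.γ X)
  set Q := 𝔖.Λ a (𝔖.γ Z)
  -- `γ P = γ X` and `γ Q = γ Z`, so [C] bounds the four summands of `⟪P + Q, X + Z⟫`,
  -- whose sum is `‖X + Z‖ ^ 2`: all four bounds are equalities
  have hPX : ⟪P, X⟫ ≤ ‖X‖ ^ 2 := by
    simpa only [P, γ_Λ_γ, real_inner_self_eq_norm_sq, norm_γ] using 𝔖.inner_le P X
  have hPZ : ⟪P, Z⟫ ≤ ⟪X, Z⟫ := by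
    simpa only [P, γ_Λ_γ, h] using 𝔖.inner_le P Z
  have hQX : ⟪Q, X⟫ ≤ ⟪X, Z⟫ := by
    simpa only [Q, γ_Λ_γ, h, real_inner_comm (𝔖.γ X)] using 𝔖.inner_le Q X
  have hQZ : ⟪Q, Z⟫ ≤ ‖Z‖ ^ 2 := by
    simpa only [Q, γ_Λ_γ, real_inner_self_eq_norm_sq, norm_γ] using 𝔖.inner_le Q Z
  have hsum : ⟪P, X⟫ + ⟪P, Z⟫ + ⟪Q, X⟫ + ⟪Q, Z⟫ = ‖X‖ ^ 2 + 2 * ⟪X, Z⟫ + ‖Z‖ ^ 2 := by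
    have := congrArg (fun W => ⟪W, X + Z⟫) ha
    simp only [inner_add_left, inner_add_right, real_inner_self_eq_norm_sq] at this
    linarith [real_inner_comm X Z]
  have hP : P = X := by
    refine eq_of_norm_le_of_norm_sq_le_inner ?_ (by linarith)
    rw [(𝔖.Λ a).norm_map, norm_γ]
  exact ⟨a, hP.symm, add_left_cancel (ha.trans (congrArg (· + Q) hP))⟩

theorem Λ_mem_preimage {D : Set 𝒳} (hDinv : ∀ (s : S), ∀ x ∈ D, 𝔖.act s x ∈ D) (a : A)
    {z : 𝒳} (hz : z ∈ D) : 𝔖.Λ a z ∈ 𝔖.γ ⁻¹' D := by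
  obtain ⟨s, hs⟩ := 𝔖.τ_orbit z
  rw [mem_preimage, 𝔖.γΛ, hs]
  exact hDinv s z hz

theorem mem_projSet_preimage_iff {D : Set 𝒳} (hDinv : ∀ (s : S), ∀ x ∈ D, 𝔖.act s x ∈ D)
    {X Z : H} :
    Z ∈ projSet (𝔖.γ ⁻¹' D) X ↔ ∃ a ∈ 𝔖.AX X, ∃ z ∈ projSet D (𝔖.γ X), Z = 𝔖.Λ a z := by
  obtain ⟨b, hb⟩ := 𝔖.decomp X
  simp only [mem_projSet_iff, mem_preimage]
  constructor
  · rintro ⟨hZD, hZmin⟩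
    have hγmin : ∀ z ∈ D, ‖𝔖.γ X - 𝔖.γ Z‖ ≤ ‖𝔖.γ X - z‖ := fun z hz =>
      calc ‖𝔖.γ X - 𝔖.γ Z‖ ≤ ‖X - Z‖ := 𝔖.norm_γ_sub_γ_le X Z
        _ ≤ ‖X - 𝔖.Λ b z‖ := hZmin _ (𝔖.Λ_mem_preimage hDinv b hz)
        _ = ‖𝔖.γ X - z‖ := 𝔖.norm_sub_Λ_of_mem_AX hb z
    have hnorm : ‖X - Z‖ ≤ ‖𝔖.γ X - 𝔖.γ Z‖ :=
      calc ‖X - Z‖ ≤ ‖X - 𝔖.Λ b (𝔖.γ Z)‖ := hZmin _ (𝔖.Λ_mem_preimage hDinv b hZD)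
        _ = ‖𝔖.γ X - 𝔖.γ Z‖ := 𝔖.norm_sub_Λ_of_mem_AX hb _
    obtain ⟨a, haX, haZ⟩ := 𝔖.exists_Λ_eq_of_inner_eq (𝔖.inner_γ_eq_of_norm_sub_le hnorm)
    exact ⟨a, haX, 𝔖.γ Z, ⟨hZD, hγmin⟩, haZ⟩
  · rintro ⟨a, ha, z, ⟨hzD, hzmin⟩, rfl⟩
    refine ⟨𝔖.Λ_mem_preimage hDinv a hzD, fun W hW => ?_⟩
    calc ‖X - 𝔖.Λ a z‖ = ‖𝔖.γ X - z‖ := 𝔖.norm_sub_Λ_of_mem_AX ha z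
      _ ≤ ‖𝔖.γ X - 𝔖.γ W‖ := hzmin _ hW
      _ ≤ ‖X - W‖ := 𝔖.norm_γ_sub_γ_le X W

theorem image_sub_projSet_preimage {D : Set 𝒳} (hDinv : ∀ (s : S), ∀ x ∈ D, 𝔖.act s x ∈ D)
    (X : H) :
    (fun Z => X - Z) '' projSet (𝔖.γ ⁻¹' D) X
      = {Y | ∃ y ∈ (fun z => 𝔖.γ X - z) '' projSet D (𝔖.γ X), ∃ a ∈ 𝔖.AX X, Y = 𝔖.Λ a y} := by
  ext Y
  simp only [mem_image, mem_ofPred_eq, 𝔖.mem_projSet_preimage_iff hDinv]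
  constructor
  · rintro ⟨_, ⟨a, ha, z, hz, rfl⟩, rfl⟩
    exact ⟨_, ⟨z, hz, rfl⟩, a, ha, by rw [map_sub, ← show X = 𝔖.Λ a (𝔖.γ X) from ha]⟩
  · rintro ⟨_, ⟨z, hz, rfl⟩, a, ha, rfl⟩
    exact ⟨_, ⟨a, ha, z, hz, rfl⟩, by rw [map_sub, ← show X = 𝔖.Λ a (𝔖.γ X) from ha]⟩

end SDS

theorem cone_proj_eq_general
    (𝔖 : SDS 𝒳 H S A)
    (D : Set 𝒳) (hDinv : ∀ (s : S), ∀ x ∈ D, 𝔖.act s x ∈ D)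
    (X : H) :
    coneOf ((fun Z => X - Z) '' projSet (𝔖.γ ⁻¹' D) X)
      = {Y | ∃ y ∈ coneOf ((fun z => 𝔖.γ X - z) '' projSet D (𝔖.γ X)),
          ∃ a ∈ 𝔖.AX X, Y = 𝔖.Λ a y} ∧
    (fun Z => X - Z) '' projSet (𝔖.γ ⁻¹' D) X
      = {Y | ∃ y ∈ (fun z => 𝔖.γ X - z) '' projSet D (𝔖.γ X),
          ∃ a ∈ 𝔖.AX X, Y = 𝔖.Λ a y} := by
  have hsub := 𝔖.image_sub_projSet_preimage hDinv X
  exact ⟨by rw [hsub, coneOf_setOf_exists_apply], hsub⟩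

/-- For a nonempty `S`-invariant `D ⊆ 𝒳` and `X ∈ H`:
`cone (X - Proj_{γ⁻¹(D)}(X)) = {Λ_a y : y ∈ cone (γ(X) - Proj_D(γ(X))), a ∈ A_X}`,
and in fact `X - Proj_{γ⁻¹(D)}(X) = {Λ_a y : y ∈ γ(X) - Proj_D(γ(X)), a ∈ A_X}`. -/
theorem cone_proj_eq
    [FiniteDimensional ℝ 𝒳] [FiniteDimensional ℝ H]
    (𝔖 : SDS 𝒳 H S A) (hcl : IsClosed 𝔖.LambdaSet)
    (D : Set 𝒳) (hD : D.Nonempty) (hDinv : ∀ (s : S), ∀ x ∈ D, 𝔖.act s x ∈ D)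
    (X : H) :
    coneOf ((fun Z => X - Z) '' projSet (𝔖.γ ⁻¹' D) X)
      = {Y | ∃ y ∈ coneOf ((fun z => 𝔖.γ X - z) '' projSet D (𝔖.γ X)),
          ∃ a ∈ 𝔖.AX X, Y = 𝔖.Λ a y} ∧
    (fun Z => X - Z) '' projSet (𝔖.γ ⁻¹' D) X
      = {Y | ∃ y ∈ (fun z => 𝔖.γ X - z) '' projSet D (𝔖.γ X),
          ∃ a ∈ 𝔖.AX X, Y = 𝔖.Λ a y} :=
  cone_proj_eq_general 𝔖 D hDinv X
end
end
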